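/- Let N be a natural number, m ∈ ℝᴺ, K a symmetric N×N real matrix, α, β real numbers, t₀ < t₁ real numbers, and Q ≥ 1 a natural number. Let ψ, p : ℝ → ℝᴺ be functions each of whose components is a polynomial function of degree at most Q. Assume that for every function η : ℝ → ℝᴺ whose components are polynomial functions of degree at most Q−1, ∫_{t₀}^{t₁} [ Σᵢ mᵢ (1 − 2β pᵢ(t)) pᵢ'(t) ηᵢ(t) + α (ψ'(t))ᵀ K η(t) + (ψ(t))ᵀ K η(t) ] dt = 0, and for every function q̃ : ℝ → ℝᴺ whose components are polynomial functions of degree at most Q−1, ∫_{t₀}^{t₁} Σᵢ mᵢ (1 − 2β pᵢ(t)) (ψᵢ'(t) − pᵢ(t)) q̃ᵢ(t) dt = 0. Define E_h(ψ,p) = ½ ψᵀKψ + Σᵢ mᵢ (½ − (2β/3) pᵢ) pᵢ² for ψ, p ∈ ℝᴺ. Then E_h(ψ(t₁), p(t₁)) = E_h(ψ(t₀), p(t₀)) − α ∫_{t₀}^{t₁} (ψ'(t))ᵀ K ψ'(t) dt. -/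

import Mathlib

/-!
Test the first equation with `η = ψ'` and the second with `q = p'`; both are admissible because
differentiation lowers the degree by one. The difference of the two integrands is
`ψᵀKψ' + Σᵢ mᵢ (1 - 2β pᵢ) pᵢ pᵢ' + α ψ'ᵀKψ'`, and for symmetric `K` the first two terms are exactly
`d/dt E_h(ψ, p)`. The fundamental theorem of calculus then turns the vanishing of both residuals
into the energy identity.
-/

open MeasureTheory intervalIntegral Matrix

/-- The discrete (mass-lumped) energy `E_h(ψ,p) = ½ψᵀKψ + Σᵢ mᵢ(½ − (2β/3)pᵢ)pᵢ²`. -/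
noncomputable def Eh {N : ℕ} (m : Fin N → ℝ) (K : Matrix (Fin N) (Fin N) ℝ) (β : ℝ)
    (ψ p : Fin N → ℝ) : ℝ :=
  (1 / 2) * (ψ ⬝ᵥ K.mulVec ψ) + ∑ i, m i * ((1 / 2 - (2 * β / 3) * p i) * (p i) ^ 2)

theorem Matrix.IsSymm.dotProduct_mulVec_comm {R ι : Type*} [CommSemiring R] [Fintype ι]
    {K : Matrix ι ι R} (hK : K.IsSymm) (x y : ι → R) : x ⬝ᵥ K *ᵥ y = y ⬝ᵥ K *ᵥ x := by
  rw [dotProduct_mulVec, ← mulVec_transpose, hK.eq, dotProduct_comm]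

section Derivatives

variable {𝕜 ι κ : Type*} [NontriviallyNormedField 𝕜] [Fintype ι] {x y : 𝕜 → ι → 𝕜}
  {x' y' : ι → 𝕜} {t : 𝕜}

theorem HasDerivAt.dotProduct (hx : HasDerivAt x x' t) (hy : HasDerivAt y y' t) :
    HasDerivAt (fun s => x s ⬝ᵥ y s) (x' ⬝ᵥ y t + x t ⬝ᵥ y') t := by
  unfold _root_.dotProduct
  rw [← Finset.sum_add_distrib]
  exact HasDerivAt.fun_sum fun i _ => (hasDerivAt_pi.1 hx i).fun_mul (hasDerivAt_pi.1 hy i)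

theorem HasDerivAt.matrix_mulVec [Fintype κ] (A : Matrix κ ι 𝕜) (hy : HasDerivAt y y' t) :
    HasDerivAt (fun s => A *ᵥ y s) (A *ᵥ y') t :=
  hasDerivAt_pi.2 fun i => ((hasDerivAt_const t (A i)).dotProduct hy).congr_deriv (by simp [mulVec])

theorem HasDerivAt.dotProduct_mulVec_self {K : Matrix ι ι 𝕜} (hK : K.IsSymm)
    (hx : HasDerivAt x x' t) :
    HasDerivAt (fun s => x s ⬝ᵥ K *ᵥ x s) (2 * (x t ⬝ᵥ K *ᵥ x')) t := by
  refine (hx.dotProduct (hx.matrix_mulVec K)).congr_deriv ?_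
  rw [hK.dotProduct_mulVec_comm x']
  ring

end Derivatives

theorem HasDerivAt.cubic_potential {p : ℝ → ℝ} {p' t : ℝ} (β : ℝ) (hp : HasDerivAt p p' t) :
    HasDerivAt (fun s => (1 / 2 - 2 * β / 3 * p s) * p s ^ 2) ((1 - 2 * β * p t) * p t * p') t := by
  refine (((hp.const_mul (2 * β / 3)).const_sub (1 / 2)).fun_mul (hp.fun_pow 2)).congr_deriv ?_
  push_cast
  ring

theorem hasDerivAt_Eh {N : ℕ} (m : Fin N → ℝ) {K : Matrix (Fin N) (Fin N) ℝ} (hK : K.IsSymm)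
    (β : ℝ) {ψ p : ℝ → Fin N → ℝ} {ψ' p' : Fin N → ℝ} {t : ℝ}
    (hψ : HasDerivAt ψ ψ' t) (hp : HasDerivAt p p' t) :
    HasDerivAt (fun s => Eh m K β (ψ s) (p s))
      (ψ t ⬝ᵥ K *ᵥ ψ' + ∑ i, m i * ((1 - 2 * β * p t i) * p t i * p' i)) t := by
  have hpot := HasDerivAt.fun_sum (u := Finset.univ) fun i _ =>
    ((hasDerivAt_pi.1 hp i).cubic_potential β).const_mul (m i)
  refine (((hψ.dotProduct_mulVec_self hK).const_mul (1 / 2)).fun_add hpot).congr_deriv ?_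
  ring

def HasPolynomialComponents {ι : Type*} (Q : ℕ) (f : ℝ → ι → ℝ) : Prop :=
  ∀ i, ∃ P : Polynomial ℝ, P.natDegree ≤ Q ∧ ∀ t, f t i = P.eval t

namespace HasPolynomialComponents

variable {ι : Type*} {Q : ℕ} {f : ℝ → ι → ℝ}

theorem continuous (hf : HasPolynomialComponents Q f) : Continuous f :=
  continuous_pi fun i => by
    obtain ⟨P, -, hP⟩ := hf i
    simpa only [hP] using P.continuous

theorem hasDerivAt [Fintype ι] (hf : HasPolynomialComponents Q f) (t : ℝ) :
    HasDerivAt f (fun i => deriv (fun s => f s i) t) t :=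
  hasDerivAt_pi.2 fun i => by
    obtain ⟨P, -, hP⟩ := hf i
    simpa only [hP, Polynomial.deriv] using P.hasDerivAt t

theorem deriv (hf : HasPolynomialComponents Q f) :
    HasPolynomialComponents (Q - 1) fun t i => deriv (fun s => f s i) t := fun i => by
  obtain ⟨P, hPdeg, hP⟩ := hf i
  exact ⟨P.derivative, P.natDegree_derivative_le.trans (Nat.sub_le_sub_right hPdeg 1),
    fun t => by simp only [hP, Polynomial.deriv]⟩

end HasPolynomialComponents

theorem energy_rate_eq_sub_residuals {R ι : Type*} [CommRing R] [Fintype ι] (m : ι → R)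
    (K : Matrix ι ι R) (α β : R) (ψ ψ' p p' : ι → R) :
    ψ ⬝ᵥ K *ᵥ ψ' + ∑ i, m i * ((1 - 2 * β * p i) * p i * p' i)
      = (∑ i, m i * (1 - 2 * β * p i) * p' i * ψ' i) + α * (ψ' ⬝ᵥ K *ᵥ ψ') + ψ ⬝ᵥ K *ᵥ ψ'
        - ∑ i, m i * (1 - 2 * β * p i) * (ψ' i - p i) * p' i
        - α * (ψ' ⬝ᵥ K *ᵥ ψ') := by
  have : ∑ i, m i * ((1 - 2 * β * p i) * p i * p' i)
      = ∑ i, m i * (1 - 2 * β * p i) * p' i * ψ' i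
        - ∑ i, m i * (1 - 2 * β * p i) * (ψ' i - p i) * p' i := by
    rw [← Finset.sum_sub_distrib]
    exact Finset.sum_congr rfl fun i _ => by ring
  rw [this]
  ring

theorem discrete_energy_identity_polynomial (N : ℕ) (m : Fin N → ℝ)
    (K : Matrix (Fin N) (Fin N) ℝ) (hK : K.IsSymm) (α β : ℝ)
    (t₀ t₁ : ℝ) (Q : ℕ)
    (ψ p : ℝ → Fin N → ℝ)
    (hψ : ∀ i, ∃ P : Polynomial ℝ, P.natDegree ≤ Q ∧ ∀ t, ψ t i = P.eval t)
    (hp : ∀ i, ∃ P : Polynomial ℝ, P.natDegree ≤ Q ∧ ∀ t, p t i = P.eval t)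
    (hweak1 : ∀ η : ℝ → Fin N → ℝ,
      (∀ i, ∃ P : Polynomial ℝ, P.natDegree ≤ Q - 1 ∧ ∀ t, η t i = P.eval t) →
      (∫ t in t₀..t₁,
        (∑ i, m i * (1 - 2 * β * p t i) * deriv (fun s => p s i) t * η t i)
          + α * ((fun i => deriv (fun s => ψ s i) t) ⬝ᵥ K.mulVec (η t))
          + (ψ t ⬝ᵥ K.mulVec (η t))) = 0)
    (hweak2 : ∀ q : ℝ → Fin N → ℝ,
      (∀ i, ∃ P : Polynomial ℝ, P.natDegree ≤ Q - 1 ∧ ∀ t, q t i = P.eval t) →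
      (∫ t in t₀..t₁,
        ∑ i, m i * (1 - 2 * β * p t i)
          * (deriv (fun s => ψ s i) t - p t i) * q t i) = 0) :
    Eh m K β (ψ t₁) (p t₁)
      = Eh m K β (ψ t₀) (p t₀)
        - α * ∫ t in t₀..t₁,
            (fun i => deriv (fun s => ψ s i) t) ⬝ᵥ
              K.mulVec (fun i => deriv (fun s => ψ s i) t) := by
  have hψ : HasPolynomialComponents Q ψ := hψ
  have hp : HasPolynomialComponents Q p := hp
  have hψc := hψ.continuous
  have hpc := hp.continuous
  have hψ'c : ∀ i, Continuous fun t => deriv (fun s => ψ s i) t :=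
    continuous_pi_iff.1 hψ.deriv.continuous
  have hp'c : ∀ i, Continuous fun t => deriv (fun s => p s i) t :=
    continuous_pi_iff.1 hp.deriv.continuous
  have hE := integral_eq_sub_of_hasDerivAt
    (fun t _ => hasDerivAt_Eh m hK β (hψ.hasDerivAt t) (hp.hasDerivAt t))
    (Continuous.intervalIntegrable (by fun_prop) t₀ t₁)
  rw [integral_congr fun t _ => energy_rate_eq_sub_residuals m K α β _ _ _ _,
    intervalIntegral.integral_sub, intervalIntegral.integral_sub,
    intervalIntegral.integral_const_mul, hweak1 _ hψ.deriv, hweak2 _ hp.deriv] at hE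
  · linarith
  all_goals exact Continuous.intervalIntegrable (by fun_prop) t₀ t₁
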